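/- Consider the program with rules 'p(1) ← p(0)', 'p(0) ← p(1)', and 'p(1) ← count{X:p(X)} ≠ 1'. Under the aggregate-reduct semantics (the third rule is deleted w.r.t. S if |{t : p(t)∈S}| = 1, else its body is replaced by {p(t) : p(t)∈S}; S is an answer set iff S is the least model of the reduct), this program has no answer set. In particular {p(0),p(1)} is not an answer set, even though it is a minimal set satisfying all three rules under ordinary satisfaction where the aggregate atom is evaluated in S. -/

import Mathlib

/-!
The empty set is a model of any definite program all of whose rule bodies are nonempty, so such a
program has `∅` as its least model. For `S ≠ ∅` every body of the reduct w.r.t. `S` is nonempty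
(the aggregate rule, if present, has body `S`), so its least model `∅` is not `S`. For `S = ∅` the
count is `0 ≠ 1`, so the reduct contains the fact `p(1) ←`, and `∅` is not even a model of it.
-/


/-- Models and least models of ground definite programs. -/
def IsModel {α : Type*} (P : Set (α × Set α)) (A : Set α) : Prop :=
  ∀ r ∈ P, r.2 ⊆ A → r.1 ∈ A

def IsLeastModel {α : Type*} (P : Set (α × Set α)) (A : Set α) : Prop :=
  IsModel P A ∧ ∀ M : Set α, IsModel P M → A ⊆ M

/-- Atoms: `false` = p(0), `true` = p(1).  Aggregate reduct of the program
`{p(1) ← p(0)., p(0) ← p(1)., p(1) ← count{X:p(X)} ≠ 1}` w.r.t. S: the third rule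
is deleted if |{t : p(t)∈S}| = 1, otherwise its body becomes {p(t) : p(t) ∈ S}. -/
def reduct (S : Set Bool) : Set (Bool × Set Bool) :=
  {r | r = (true, ({false} : Set Bool))} ∪
  {r | r = (false, ({true} : Set Bool))} ∪
  {r | Set.ncard {t : Bool | t ∈ S} ≠ 1 ∧ r = (true, S)}

def AnswerSet (S : Set Bool) : Prop := IsLeastModel (reduct S) S

/-- Ordinary satisfaction of the three rules, evaluating the aggregate in S. -/
def SatisfiesRules (S : Set Bool) : Prop :=
  (false ∈ S → true ∈ S) ∧ (true ∈ S → false ∈ S) ∧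
  (Set.ncard {t : Bool | t ∈ S} ≠ 1 → true ∈ S)

theorem isModel_empty_iff {α : Type*} {P : Set (α × Set α)} :
    IsModel P ∅ ↔ ∀ r ∈ P, r.2.Nonempty := by
  simp only [IsModel, Set.subset_empty_iff, Set.mem_empty_iff_false, imp_false,
    Set.nonempty_iff_ne_empty]

theorem IsLeastModel.eq_empty {α : Type*} {P : Set (α × Set α)} {A : Set α}
    (hA : IsLeastModel P A) (hP : ∀ r ∈ P, r.2.Nonempty) : A = ∅ :=
  Set.subset_empty_iff.mp (hA.2 ∅ (isModel_empty_iff.mpr hP))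

theorem reduct_body_nonempty {S : Set Bool} (hS : S.Nonempty) :
    ∀ r ∈ reduct S, r.2.Nonempty := by
  rintro r ((rfl | rfl) | ⟨-, rfl⟩)
  exacts [Set.singleton_nonempty _, Set.singleton_nonempty _, hS]

theorem fact_mem_reduct_empty : (true, ∅) ∈ reduct ∅ :=
  Or.inr ⟨by simp, rfl⟩

theorem not_answerSet (S : Set Bool) : ¬ AnswerSet S := by
  intro hS
  rcases S.eq_empty_or_nonempty with rfl | hne
  · exact hS.1 _ fact_mem_reduct_empty le_rfl
  · exact hne.ne_empty (hS.eq_empty (reduct_body_nonempty hne))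

theorem satisfiesRules_iff {S : Set Bool} : SatisfiesRules S ↔ S = {false, true} := by
  constructor
  · rintro ⟨h01, h10, hcount⟩
    have htrue : true ∈ S := by
      by_contra ht
      have hS : S = ∅ := Set.eq_empty_of_forall_notMem fun
        | false, hf => ht (h01 hf)
        | true, h => ht h
      exact ht (hcount (by simp [hS]))
    ext (_ | _) <;> simp [htrue, h10 htrue]
  · rintro rfl
    exact ⟨fun _ => by simp, fun _ => by simp, fun _ => by simp⟩

theorem no_answer_set_but_minimal_model :
    (∀ S : Set Bool, ¬ AnswerSet S) ∧
    ¬ AnswerSet {false, true} ∧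
    SatisfiesRules {false, true} ∧
    (∀ B : Set Bool, B ⊆ {false, true} → SatisfiesRules B → B = {false, true}) :=
  ⟨not_answerSet, not_answerSet _, satisfiesRules_iff.mpr rfl,
    fun _ _ hB => satisfiesRules_iff.mp hB⟩
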